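/- Let Γ ⊂ ℝ^d be a point set such that for every cluster type, uniform cluster frequencies exist (unique ergodicity of the hull). Then every element Γ' of the hull 𝕏(Γ) has the same autocorrelation measure γ = ∑_{z ∈ Γ−Γ} η(z) δ_z, where η(z) = lim_{r→∞} (1/vol(B_r)) card(Γ_r ∩ (z + Γ_r)). -/

import Mathlib

open Set Pointwise Metric Filter MeasureTheory

/-- `Γ'` lies in the hull `𝕏(Γ)` of `Γ` (closure of the translation orbit in the
local topology: on every large ball, `Γ'` agrees with a slightly translated
translate of `Γ`). -/
def InHull {d : ℕ} (Γ Γ' : Set (EuclideanSpace ℝ (Fin d))) : Prop :=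
  ∀ R > (0 : ℝ), ∀ ε > (0 : ℝ), ∃ t s : EuclideanSpace ℝ (Fin d), ‖s‖ < ε ∧
    ((s + t) +ᵥ Γ) ∩ ball 0 R = Γ' ∩ ball 0 R

/-- The finite-range autocorrelation `card(A_r ∩ (z + A_r)) / vol(B_r)`. -/
noncomputable def corrCoef {d : ℕ} (A : Set (EuclideanSpace ℝ (Fin d)))
    (z : EuclideanSpace ℝ (Fin d)) (r : ℝ) : ℝ :=
  (Set.ncard ((A ∩ ball 0 r) ∩ (z +ᵥ (A ∩ ball 0 r))) : ℝ) /
    (volume (ball (0 : EuclideanSpace ℝ (Fin d)) r)).toReal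

/-!
Fix `z` and put `ρ = ‖z‖ + 1`. By finite local complexity only finitely many `ρ`-clusters occur
in the translates `t + Γ`. For `x` in `(t + Γ) ∩ B_r` the condition `x - z ∈ t + Γ` can be read
off the `ρ`-cluster at `x`, so the number of such `x`, divided by `vol B_r`, is a finite sum of
cluster frequencies and converges uniformly in `t`. This count differs from the numerator of the
autocorrelation coefficient only by points within `‖z‖` of the boundary of `B_r`, and their
density tends to `0` uniformly in `t`, because the total density converges uniformly and
`vol B_{r - ‖z‖} / vol B_r → 1`. Uniform convergence in `t` of the coefficients of `t + Γ` then
transfers to every `Γ'` in the hull, since `Γ'` agrees with a translate of `Γ` on each ball.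
-/

open Topology

theorem Set.Finite.ncard_eq_sum_ncard_fiber {α β : Type*} [DecidableEq β] {s : Set α}
    (hs : s.Finite) {g : α → β} {u : Finset β} (hu : MapsTo g s u) :
    s.ncard = ∑ b ∈ u, {x ∈ s | g x = b}.ncard := by
  rw [ncard_eq_toFinset_card s hs, Finset.card_eq_sum_card_fiberwise (by simpa using hu)]
  refine Finset.sum_congr rfl fun b _ => ?_
  rw [ncard_eq_toFinset_card _ (hs.sep _)]
  congr 1
  ext x
  simp

theorem Set.Finite.ncard_sep_eq_sum_ncard_fiber {α β : Type*} [DecidableEq β] {s : Set α}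
    (hs : s.Finite) {g : α → β} {u : Finset β} (hu : MapsTo g s u) (Q : β → Prop)
    [DecidablePred Q] :
    {x ∈ s | Q (g x)}.ncard = ∑ b ∈ u with Q b, {x ∈ s | g x = b}.ncard := by
  rw [(hs.sep _).ncard_eq_sum_ncard_fiber (u := u.filter Q)
    fun x hx => by simpa using ⟨hu hx.1, hx.2⟩]
  refine Finset.sum_congr rfl fun b hb => ?_
  congr 1
  ext x
  simp only [mem_ofPred_eq, and_assoc, and_congr_right_iff, and_iff_right_iff_imp]
  rintro - rfl
  exact (Finset.mem_filter.1 hb).2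

section FiniteLocalComplexity

variable {E : Type*}

def HasFiniteLocalComplexity [AddGroup E] [TopologicalSpace E] (Γ : Set E) : Prop :=
  ∀ K : Set E, IsCompact K → ((Γ - Γ) ∩ K).Finite

theorem vadd_set_sub_vadd_set_self [AddCommGroup E] (t : E) (A : Set E) :
    (t +ᵥ A) - (t +ᵥ A) = A - A := by
  ext x
  simp only [Set.mem_sub, mem_vadd_set, vadd_eq_add]
  constructor
  · rintro ⟨_, ⟨a, ha, rfl⟩, _, ⟨b, hb, rfl⟩, rfl⟩
    exact ⟨a, ha, b, hb, (add_sub_add_left_eq_sub a b t).symm⟩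
  · rintro ⟨a, ha, b, hb, rfl⟩
    exact ⟨_, ⟨a, ha, rfl⟩, _, ⟨b, hb, rfl⟩, add_sub_add_left_eq_sub a b t⟩

theorem HasFiniteLocalComplexity.vadd [AddCommGroup E] [TopologicalSpace E] {Γ : Set E}
    (hΓ : HasFiniteLocalComplexity Γ) (t : E) : HasFiniteLocalComplexity (t +ᵥ Γ) := by
  rwa [HasFiniteLocalComplexity, vadd_set_sub_vadd_set_self]

theorem HasFiniteLocalComplexity.finite_inter [AddGroup E] [TopologicalSpace E] [ContinuousAdd E]
    {Γ : Set E} (hΓ : HasFiniteLocalComplexity Γ) {K : Set E} (hK : IsCompact K) :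
    (Γ ∩ K).Finite := by
  rcases Γ.eq_empty_or_nonempty with rfl | ⟨a, ha⟩
  · simp
  -- `Γ ∩ K` is the translate by `a` of a subset of `(Γ - Γ) ∩ (K - a)`
  refine ((hΓ _ (hK.image (continuous_add_const (-a)))).image (· + a)).subset ?_
  rintro x ⟨hx, hxK⟩
  exact ⟨x - a, ⟨⟨x, hx, a, ha, rfl⟩, x, hxK, (sub_eq_add_neg x a).symm⟩, sub_add_cancel x a⟩

end FiniteLocalComplexity

section Clusters

variable {E : Type*} [NormedAddCommGroup E]

def localCluster (A : Set E) (ρ : ℝ) (x : E) : Set E :=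
  ((-x) +ᵥ A) ∩ closedBall 0 ρ

noncomputable def clusterCount (A : Set E) (ρ : ℝ) (F : Set E) (r : ℝ) : ℕ :=
  {x | x ∈ A ∧ x ∈ ball (0 : E) r ∧ localCluster A ρ x = F}.ncard

theorem clusterCount_eq_ncard_sep (A : Set E) (ρ : ℝ) (F : Set E) (r : ℝ) :
    clusterCount A ρ F r = {x ∈ A ∩ ball 0 r | localCluster A ρ x = F}.ncard := by
  simp only [clusterCount, mem_inter_iff, and_assoc]

theorem localCluster_subset {A : Set E} {x : E} (hx : x ∈ A) (ρ : ℝ) :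
    localCluster A ρ x ⊆ (A - A) ∩ closedBall 0 ρ := by
  rintro y ⟨hy, hyρ⟩
  rw [mem_vadd_set_iff_neg_vadd_mem, vadd_eq_add, neg_neg] at hy
  exact ⟨⟨x + y, hy, x, hx, add_sub_cancel_left x y⟩, hyρ⟩

theorem neg_mem_localCluster_iff {A : Set E} {ρ : ℝ} {z : E} (hz : ‖z‖ ≤ ρ) (x : E) :
    -z ∈ localCluster A ρ x ↔ x - z ∈ A := by
  simp [localCluster, mem_vadd_set_iff_neg_vadd_mem, sub_eq_add_neg, hz]

theorem HasFiniteLocalComplexity.exists_finset_localCluster_vadd [ProperSpace E] {Γ : Set E}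
    (hΓ : HasFiniteLocalComplexity Γ) (ρ : ℝ) :
    ∃ T : Finset (Set E), ∀ t : E, ∀ x ∈ t +ᵥ Γ, localCluster (t +ᵥ Γ) ρ x ∈ T := by
  refine ⟨(hΓ _ (isCompact_closedBall 0 ρ)).finite_subsets.toFinset, fun t x hx => ?_⟩
  simpa [← vadd_set_sub_vadd_set_self t Γ] using localCluster_subset hx ρ

theorem HasFiniteLocalComplexity.finite_inter_ball [ProperSpace E] {A : Set E}
    (hA : HasFiniteLocalComplexity A) (r : ℝ) : (A ∩ ball 0 r).Finite :=
  (hA.finite_inter (isCompact_closedBall 0 r)).subset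
    (inter_subset_inter_right _ ball_subset_closedBall)

theorem ncard_inter_vadd_le_ncard_sep {A : Set E} {r : ℝ} (hA : (A ∩ ball 0 r).Finite) (z : E) :
    ((A ∩ ball 0 r) ∩ (z +ᵥ (A ∩ ball 0 r))).ncard ≤ {x ∈ A ∩ ball 0 r | x - z ∈ A}.ncard := by
  refine ncard_le_ncard ?_ (hA.sep _)
  rintro x ⟨hx, hxz⟩
  rw [mem_vadd_set_iff_neg_vadd_mem, vadd_eq_add, neg_add_eq_sub] at hxz
  exact ⟨hx, hxz.1⟩

theorem ncard_sep_add_ncard_le {A : Set E} {r : ℝ} (hA : (A ∩ ball 0 r).Finite) (z : E) :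
    {x ∈ A ∩ ball 0 r | x - z ∈ A}.ncard + (A ∩ ball 0 (r - ‖z‖)).ncard ≤
      ((A ∩ ball 0 r) ∩ (z +ᵥ (A ∩ ball 0 r))).ncard + (A ∩ ball 0 r).ncard := by
  have hsub : A ∩ ball 0 (r - ‖z‖) ⊆ A ∩ ball 0 r :=
    inter_subset_inter_right _ (ball_subset_ball (by linarith [norm_nonneg z]))
  have hcover : {x ∈ A ∩ ball 0 r | x - z ∈ A} ⊆
      ((A ∩ ball 0 r) ∩ (z +ᵥ (A ∩ ball 0 r))) ∪ ((A ∩ ball 0 r) \ (A ∩ ball 0 (r - ‖z‖))) := by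
    rintro x ⟨hx, hxz⟩
    by_cases hxzr : x - z ∈ ball (0 : E) r
    · left
      rw [mem_inter_iff, mem_vadd_set_iff_neg_vadd_mem, vadd_eq_add, neg_add_eq_sub]
      exact ⟨hx, hxz, hxzr⟩
    · refine Or.inr ⟨hx, fun hx' => hxzr ?_⟩
      have := norm_sub_le x z
      rw [mem_ball_zero_iff]
      linarith [mem_ball_zero_iff.1 hx'.2]
  have hdiff := ncard_sdiff_add_ncard_of_subset hsub hA
  have hunion := (ncard_le_ncard hcover ((hA.inter_of_left _).union hA.sdiff)).trans
    (ncard_union_le _ _)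
  omega

end Clusters

theorem tendsto_measure_ball_sub_div_measure_ball {E : Type*} [NormedAddCommGroup E]
    [NormedSpace ℝ E] [MeasurableSpace E] [BorelSpace E] [FiniteDimensional ℝ E]
    (μ : Measure E) [μ.IsAddHaarMeasure] (c : ℝ) :
    Tendsto (fun r => (μ (ball (0 : E) (r - c))).toReal / (μ (ball (0 : E) r)).toReal)
      atTop (𝓝 1) := by
  have hunit : (μ (ball (0 : E) 1)).toReal ≠ 0 :=
    ENNReal.toReal_ne_zero.2 ⟨(measure_ball_pos μ 0 one_pos).ne', measure_ball_lt_top.ne⟩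
  have hlim : Tendsto (fun r : ℝ => (1 - c / r) ^ Module.finrank ℝ E) atTop (𝓝 1) := by
    simpa using ((tendsto_const_nhds.div_atTop tendsto_id).const_sub (1 : ℝ)).pow _
  refine hlim.congr' ?_
  filter_upwards [eventually_gt_atTop (max c 0)] with r hr
  have hr0 : 0 < r := (le_max_right c 0).trans_lt hr
  have hrc : 0 < r - c := sub_pos.2 ((le_max_left c 0).trans_lt hr)
  rw [Measure.addHaar_ball_of_pos μ 0 hrc, Measure.addHaar_ball_of_pos μ 0 hr0,
    ENNReal.toReal_mul, ENNReal.toReal_mul, ENNReal.toReal_ofReal (by positivity),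
    ENNReal.toReal_ofReal (by positivity), mul_div_mul_right _ _ hunit, ← div_pow, sub_div,
    div_self hr0.ne']

theorem tendsto_div_measure_ball_of_sub {E : Type*} [NormedAddCommGroup E] [NormedSpace ℝ E]
    [MeasurableSpace E] [BorelSpace E] [FiniteDimensional ℝ E] {μ : Measure E}
    [μ.IsAddHaarMeasure] {g : ℝ × E → ℝ} {D : ℝ}
    (h : Tendsto (fun p => g p / (μ (ball (0 : E) p.1)).toReal) (atTop ×ˢ ⊤) (𝓝 D)) (c : ℝ) :
    Tendsto (fun p => g (p.1 - c, p.2) / (μ (ball (0 : E) p.1)).toReal) (atTop ×ˢ ⊤) (𝓝 D) := by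
  have hshift : Tendsto (Prod.map (· - c) id) (atTop ×ˢ ⊤) (atTop ×ˢ (⊤ : Filter E)) :=
    (tendsto_atTop_add_const_right _ _ tendsto_id).prodMap tendsto_id
  have hratio := (tendsto_measure_ball_sub_div_measure_ball μ c).comp
    (tendsto_fst (g := (⊤ : Filter E)))
  refine ((h.comp hshift).mul hratio).congr' ?_ |>.trans (by rw [mul_one])
  filter_upwards [(eventually_gt_atTop c).prod_inl ⊤] with p hp
  have : (μ (ball (0 : E) (p.1 - c))).toReal ≠ 0 := ENNReal.toReal_ne_zero.2
    ⟨(measure_ball_pos _ _ (sub_pos.2 hp)).ne', measure_ball_lt_top.ne⟩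
  simp only [Function.comp, Prod.map, id]
  rw [div_mul_div_cancel₀ this]

section ClusterFrequencies

variable {E : Type*} [NormedAddCommGroup E] [MeasurableSpace E]

def HasUniformClusterFrequencies (μ : Measure E) (Γ : Set E) : Prop :=
  ∀ (F : Set E) (ρ : ℝ), 0 < ρ → ∃ f : ℝ, ∀ ε > (0 : ℝ), ∃ r₀ : ℝ, ∀ r ≥ r₀, ∀ t : E,
    |(clusterCount (t +ᵥ Γ) ρ F r : ℝ) / (μ (ball (0 : E) r)).toReal - f| < ε

-- uniformity in the translation `t` is convergence along `atTop ×ˢ ⊤` in the pair `(r, t)`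
theorem HasUniformClusterFrequencies.tendsto {μ : Measure E} {Γ : Set E}
    (hΓ : HasUniformClusterFrequencies μ Γ) (F : Set E) {ρ : ℝ} (hρ : 0 < ρ) :
    ∃ f : ℝ, Tendsto (fun p : ℝ × E =>
      (clusterCount (p.2 +ᵥ Γ) ρ F p.1 : ℝ) / (μ (ball (0 : E) p.1)).toReal)
      (atTop ×ˢ ⊤) (𝓝 f) := by
  obtain ⟨f, hf⟩ := hΓ F ρ hρ
  refine ⟨f, Metric.tendsto_nhds.2 fun ε hε => ?_⟩
  obtain ⟨r₀, hr₀⟩ := hf ε hε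
  exact ((eventually_ge_atTop r₀).prod_inl ⊤).mono fun p hp => hr₀ p.1 hp p.2

theorem tendsto_ncard_sep_localCluster_div [ProperSpace E] {μ : Measure E} {Γ : Set E}
    (hΓ : HasFiniteLocalComplexity Γ) {ρ : ℝ} {T : Finset (Set E)}
    (hT : ∀ t : E, ∀ x ∈ t +ᵥ Γ, localCluster (t +ᵥ Γ) ρ x ∈ T) {f : Set E → ℝ}
    (hf : ∀ F ∈ T, Tendsto (fun p : ℝ × E =>
      (clusterCount (p.2 +ᵥ Γ) ρ F p.1 : ℝ) / (μ (ball (0 : E) p.1)).toReal)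
      (atTop ×ˢ ⊤) (𝓝 (f F)))
    (Q : Set E → Prop) [DecidablePred Q] :
    Tendsto (fun p : ℝ × E =>
      ({x ∈ (p.2 +ᵥ Γ) ∩ ball 0 p.1 | Q (localCluster (p.2 +ᵥ Γ) ρ x)}.ncard : ℝ) /
        (μ (ball (0 : E) p.1)).toReal)
      (atTop ×ˢ ⊤) (𝓝 (∑ F ∈ T with Q F, f F)) := by
  classical
  refine (tendsto_finsetSum _ fun F hF => hf F (Finset.mem_filter.1 hF).1).congr fun p => ?_
  rw [((hΓ.vadd p.2).finite_inter_ball p.1).ncard_sep_eq_sum_ncard_fiber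
    (fun x hx => hT p.2 x hx.1) Q]
  push_cast
  simp only [Finset.sum_div, clusterCount_eq_ncard_sep]

end ClusterFrequencies

theorem tendsto_corrCoef_vadd {d : ℕ} {Γ : Set (EuclideanSpace ℝ (Fin d))}
    (hFLC : HasFiniteLocalComplexity Γ) (hUCF : HasUniformClusterFrequencies volume Γ)
    (z : EuclideanSpace ℝ (Fin d)) :
    ∃ c : ℝ, Tendsto (fun p : ℝ × EuclideanSpace ℝ (Fin d) => corrCoef (p.2 +ᵥ Γ) z p.1)
      (atTop ×ˢ ⊤) (𝓝 c) := by
  classical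
  set V : ℝ → ℝ := fun r => (volume (ball (0 : EuclideanSpace ℝ (Fin d)) r)).toReal
  obtain ⟨T, hT⟩ := hFLC.exists_finset_localCluster_vadd (‖z‖ + 1)
  choose f hf using fun F => hUCF.tendsto F (by positivity : 0 < ‖z‖ + 1)
  have hdensity := tendsto_ncard_sep_localCluster_div hFLC hT (fun F _ => hf F)
  have hall : Tendsto (fun p : ℝ × EuclideanSpace ℝ (Fin d) =>
      (((p.2 +ᵥ Γ) ∩ ball 0 p.1).ncard : ℝ) / V p.1) (atTop ×ˢ ⊤) (𝓝 (∑ F ∈ T, f F)) := by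
    simpa only [sep_true, Finset.filter_true] using hdensity fun _ => True
  have hinner := tendsto_div_measure_ball_of_sub
    (g := fun p => (((p.2 +ᵥ Γ) ∩ ball 0 p.1).ncard : ℝ)) hall ‖z‖
  have hpairs : Tendsto (fun p : ℝ × EuclideanSpace ℝ (Fin d) =>
      ({x ∈ (p.2 +ᵥ Γ) ∩ ball 0 p.1 | x - z ∈ p.2 +ᵥ Γ}.ncard : ℝ) / V p.1) (atTop ×ˢ ⊤)
      (𝓝 (∑ F ∈ T with -z ∈ F, f F)) := by
    simpa only [neg_mem_localCluster_iff (lt_add_one ‖z‖).le] using hdensity (-z ∈ ·)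
  have hlower := hpairs.sub (hall.sub hinner)
  rw [sub_self, sub_zero] at hlower
  refine ⟨_, tendsto_of_tendsto_of_tendsto_of_le_of_le hlower hpairs (fun p => ?_) (fun p => ?_)⟩
  all_goals
    have hfin := (hFLC.vadd p.2).finite_inter_ball p.1
    have hV : 0 ≤ V p.1 := ENNReal.toReal_nonneg
  · have key := div_le_div_of_nonneg_right
      ((Nat.cast_le (α := ℝ)).2 (ncard_sep_add_ncard_le hfin z)) hV
    push_cast [add_div] at key
    change _ ≤ _ / V p.1
    linarith
  · exact div_le_div_of_nonneg_right (Nat.cast_le.2 (ncard_inter_vadd_le_ncard_sep hfin z)) hV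

theorem InHull.exists_vadd_inter_ball_eq {d : ℕ} {Γ Γ' : Set (EuclideanSpace ℝ (Fin d))}
    (h : InHull Γ Γ') (r : ℝ) :
    ∃ u : EuclideanSpace ℝ (Fin d), (u +ᵥ Γ) ∩ ball 0 r = Γ' ∩ ball 0 r := by
  obtain ⟨t, s, -, heq⟩ := h (max r 1) (lt_max_of_lt_right one_pos) 1 one_pos
  refine ⟨s + t, ?_⟩
  rw [← inter_eq_right.2 (ball_subset_ball (le_max_left r 1)), ← inter_assoc, heq, inter_assoc]

theorem corrCoef_congr {d : ℕ} {A B : Set (EuclideanSpace ℝ (Fin d))} {r : ℝ}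
    (h : A ∩ ball 0 r = B ∩ ball 0 r) (z : EuclideanSpace ℝ (Fin d)) :
    corrCoef A z r = corrCoef B z r := by
  rw [corrCoef, corrCoef, h]

/-- If the FLC set `Γ ⊂ ℝ^d` has uniform cluster frequencies
(unique ergodicity of its hull), then every element `Γ'` of the hull `𝕏(Γ)` has
the same autocorrelation coefficients `η(z) = lim_{r→∞} card(Γ_r ∩ (z+Γ_r))/vol(B_r)`. -/
theorem hull_has_same_autocorrelation {d : ℕ}
    (Γ : Set (EuclideanSpace ℝ (Fin d)))
    (hFLC : ∀ K : Set (EuclideanSpace ℝ (Fin d)), IsCompact K → ((Γ - Γ) ∩ K).Finite)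
    -- uniform cluster frequencies: for every cluster `F` at radius `ρ`, the
    -- frequency exists uniformly in the translation parameter `t`
    (hUCF : ∀ (F : Set (EuclideanSpace ℝ (Fin d))) (ρ : ℝ), 0 < ρ →
      ∃ f : ℝ, ∀ ε > (0 : ℝ), ∃ r₀ : ℝ, ∀ r ≥ r₀, ∀ t : EuclideanSpace ℝ (Fin d),
        |((Set.ncard {x | x ∈ (t +ᵥ Γ) ∧ x ∈ ball (0 : EuclideanSpace ℝ (Fin d)) r ∧
              ((-x) +ᵥ (t +ᵥ Γ)) ∩ closedBall 0 ρ = F} : ℝ) /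
            (volume (ball (0 : EuclideanSpace ℝ (Fin d)) r)).toReal) - f| < ε) :
    ∃ η : EuclideanSpace ℝ (Fin d) → ℝ,
      (∀ z, Tendsto (corrCoef Γ z) atTop (nhds (η z))) ∧
      (∀ Γ', InHull Γ Γ' → ∀ z, Tendsto (corrCoef Γ' z) atTop (nhds (η z))) := by
  choose η hη using tendsto_corrCoef_vadd (Γ := Γ) hFLC hUCF
  refine ⟨η, fun z => ?_, fun Γ' hΓ' z => ?_⟩
  · exact ((hη z).comp (tendsto_id.prodMk (tendsto_top (f := fun _ => 0)))).congr fun r => by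
      simp only [Function.comp_apply, id, zero_vadd]
  · choose u hu using hΓ'.exists_vadd_inter_ball_eq
    exact ((hη z).comp (tendsto_id.prodMk (tendsto_top (f := u)))).congr fun r =>
      corrCoef_congr (hu r) z
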